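/- Let f ∈ ℂ[x_1,…,x_n] be invariant under the subgroup S_λ ⊂ S_n of permutations preserving each block I^min_j. Then for all x, y ∈ ℂ^n, each with pairwise distinct coordinates, f(x) = Σ_{J ∈ 𝓘_λ} [ V_λ(x; y_{σ_J}) / V_λ(y_{σ_J}; y_{σ_J}) · Σ_{I ∈ 𝓘_λ} f(x_{σ_I}) · V_λ(y_{σ_J}; x_{σ_I}) / V_λ(x_{σ_I}; x_{σ_I}) ]. -/
import Mathlib


/-!
Common setup.  Fix integers `N ≥ 1`, `n ≥ 1` and `λ = (λ_1,…,λ_N) ∈ ℤ_{≥0}^N` with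
`λ_1 + ⋯ + λ_N = n` (encoded as `lam : Fin N → ℕ`, 0-indexed).  Positions in `{1,…,n}` are
encoded as elements of `Fin n` (0-indexed) and block indices in `{1,…,N}` as elements of
`Fin N` (0-indexed).  An element `I = (I_1,…,I_N) ∈ 𝓘_λ` is encoded as a function
`I : Fin N → Finset (Fin n)` satisfying `IsLamPartition`.

The variables `t^{(j)}_a` (`j = 1,…,N−1` the paper's 1-indexed group, `a` 0-indexed within the
group) are encoded as a function `t : ℕ → ℕ → ℂ`; the convention `t^{(N)}_a = z_a` is realized
by `TT`.  The weight functions `W_I`, `W°_I` are realized as functions of the complex variables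
(the symmetrizations `W`, `Wcirc` of `Ufun`, `Ucirc`); an identity of polynomials is stated as
the corresponding identity of these functions at all points where the (cancelling) denominators
do not vanish, which determines the polynomials uniquely.
-/

open scoped Classical

noncomputable section


lemma degreeOf_prod_le' {σ R : Type*} [CommRing R] {ι : Type*} (c : σ) (s : Finset ι)
    (f : ι → MvPolynomial σ R) :
    MvPolynomial.degreeOf c (∏ i ∈ s, f i) ≤ ∑ i ∈ s, MvPolynomial.degreeOf c (f i) := by
  induction s using Finset.cons_induction with
  | empty => simpa using MvPolynomial.degreeOf_C (1:R) c
  | cons a s ha ih =>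
      rw [Finset.prod_cons, Finset.sum_cons]
      exact le_trans (MvPolynomial.degreeOf_mul_le _ _ _) (by omega)

lemma degreeOf_sum_le' {σ R : Type*} [CommRing R] {ι : Type*} (c : σ) (s : Finset ι)
    (f : ι → MvPolynomial σ R) (d : ℕ) (h : ∀ i ∈ s, MvPolynomial.degreeOf c (f i) ≤ d) :
    MvPolynomial.degreeOf c (∑ i ∈ s, f i) ≤ d := by
  induction s using Finset.cons_induction with
  | empty => simp
  | cons a s ha ih =>
      rw [Finset.sum_cons]
      refine le_trans (MvPolynomial.degreeOf_add_le _ _ _) ?_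
      simp only [max_le_iff]
      exact ⟨h a (Finset.mem_cons_self a s), ih fun i hi => h i (Finset.mem_cons.2 (Or.inr hi))⟩

lemma cons_injective' {m n : ℕ} {τ : Fin m → Fin n} (hτ : Function.Injective τ) {j : Fin n}
    (hj : ∀ a, τ a ≠ j) : Function.Injective (Fin.cons j τ : Fin (m+1) → Fin n) := by
  intro a b hab
  induction a using Fin.cases with
  | zero =>
      induction b using Fin.cases with
      | zero => rfl
      | succ b => rw [Fin.cons_zero, Fin.cons_succ] at hab; exact absurd hab.symm (hj b)
  | succ a =>
      induction b using Fin.cases with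
      | zero => rw [Fin.cons_zero, Fin.cons_succ] at hab; exact absurd hab (hj a)
      | succ b => rw [Fin.cons_succ, Fin.cons_succ] at hab; exact congrArg Fin.succ (hτ hab)

/-- Key vanishing lemma: multivariate polynomial with staircase degree bounds vanishing at
all injective tuples of nodes is zero. -/
lemma vanishAux (n : ℕ) (y : Fin n → ℂ) (hy : Function.Injective y) :
    ∀ m : ℕ, m ≤ n → ∀ P : MvPolynomial (Fin m) ℂ,
    (∀ a : Fin m, P.degreeOf a + m ≤ n + (a : ℕ)) →
    (∀ τ : Fin m → Fin n, Function.Injective τ →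
      MvPolynomial.eval (fun a => y (τ a)) P = 0) → P = 0 := by
  intro m
  induction m with
  | zero =>
      intro _ P _ hvan
      obtain ⟨c, rfl⟩ := MvPolynomial.C_surjective (Fin 0) P
      have := hvan (fun a => a.elim0) (fun a => a.elim0)
      simpa using this
  | succ m ih =>
      intro hm P hdeg hvan
      have hPe : MvPolynomial.finSuccEquiv ℂ m P = 0 := by
        ext d : 1
        rw [Polynomial.coeff_zero]
        apply ih (le_of_lt hm)
        · intro a
          have h1 := MvPolynomial.degreeOf_coeff_finSuccEquiv P a d
          have h2 := hdeg a.succ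
          simp only [Fin.val_succ] at h2
          omega
        · intro τ hτ
          -- univariate polynomial in the peeled variable
          set r : Polynomial ℂ :=
            Polynomial.map (MvPolynomial.eval (fun a => y (τ a)))
              (MvPolynomial.finSuccEquiv ℂ m P) with hr
          have hrdeg : r.natDegree < n - m := by
            have h1 : r.natDegree ≤ (MvPolynomial.finSuccEquiv ℂ m P).natDegree :=
              Polynomial.natDegree_map_le
            rw [MvPolynomial.natDegree_finSuccEquiv] at h1
            have h2 := hdeg 0
            simp only [Fin.val_zero] at h2
            omega
          have hrzero : r = 0 := by
            classical
            set s : Finset (Fin n) := Finset.univ \ Finset.univ.image τ with hs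
            have hcard : n - m ≤ s.card := by
              rw [hs, Finset.card_sdiff_of_subset (Finset.subset_univ _)]
              have : (Finset.univ.image τ).card ≤ m := by
                refine le_trans (Finset.card_image_le) ?_
                simp
              simp only [Finset.card_univ, Fintype.card_fin]
              omega
            apply Polynomial.eq_zero_of_natDegree_lt_card_of_eval_eq_zero r
              (f := fun j : s => y j.1)
              (fun a b hab => Subtype.ext (hy hab))
            · rintro ⟨j, hj⟩
              have hjτ : ∀ a, τ a ≠ j := by
                intro a haj
                rw [hs, Finset.mem_sdiff] at hj
                exact hj.2 (Finset.mem_image.2 ⟨a, Finset.mem_univ a, haj⟩)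
              have := hvan (Fin.cons j τ) (cons_injective' hτ hjτ)
              have hfun : (fun a => y ((Fin.cons j τ : Fin (m+1) → Fin n) a))
                  = Fin.cons (y j) (fun a => y (τ a)) := by
                funext a
                induction a using Fin.cases with
                | zero => simp
                | succ a => simp
              rw [hfun, MvPolynomial.eval_eq_eval_mv_eval'] at this
              exact this
            · rw [Fintype.card_coe]
              omega
          have : r.coeff d = 0 := by rw [hrzero, Polynomial.coeff_zero]
          rw [hr, Polynomial.coeff_map] at this
          exact this
      have := (MvPolynomial.finSuccEquiv ℂ m).injective
        (by rw [hPe, map_zero] : MvPolynomial.finSuccEquiv ℂ m P =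
          MvPolynomial.finSuccEquiv ℂ m 0)
      exact this

/-- `λ^{(j)} = λ_1 + ⋯ + λ_j` for `j : ℕ` (so `Lam N lam 0 = 0`, `Lam N lam N = n`). -/
def Lam (N : ℕ) (lam : Fin N → ℕ) (j : ℕ) : ℕ :=
  ∑ k ∈ Finset.univ.filter (fun k : Fin N => (k : ℕ) < j), lam k

/-- `I_1 ∪ ⋯ ∪ I_j` for `j : ℕ` (paper's 1-indexed `j`). -/
def cupI (N n : ℕ) (I : Fin N → Finset (Fin n)) (j : ℕ) : Finset (Fin n) :=
  (Finset.univ.filter (fun k : Fin N => (k : ℕ) < j)).biUnion I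

/-- `i^{(j)}_{a+1}`: the `(a+1)`-th smallest element of `I_1 ∪ ⋯ ∪ I_j`, as a natural number. -/
def idx (N n : ℕ) (I : Fin N → Finset (Fin n)) (j a : ℕ) : ℕ :=
  (((cupI N n I j).sort (· ≤ ·)).map Fin.val).getD a 0

/-- `z_{a+1}` for a natural-number index `a` (junk `0` out of range). -/
def zf (n : ℕ) (z : Fin n → ℂ) (a : ℕ) : ℂ := if h : a < n then z ⟨a, h⟩ else 0

/-- `TT N n t z j a = t^{(j)}_{a+1}` for `j ≤ N−1`, and `= z_{a+1}` for `j = N`. -/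
def TT (N n : ℕ) (t : ℕ → ℕ → ℂ) (z : Fin n → ℂ) (j a : ℕ) : ℂ :=
  if j = N then zf n z a else t j a

/-- `I = (I_1,…,I_N)` is a member of `𝓘_λ`: the `I_j` are pairwise disjoint with union
`{1,…,n}` and `|I_j| = λ_j`. -/
def IsLamPartition (N n : ℕ) (lam : Fin N → ℕ) (I : Fin N → Finset (Fin n)) : Prop :=
  (∀ j, (I j).card = lam j) ∧ ∀ a : Fin n, ∃! j, a ∈ I j

/-- The (finite) set `𝓘_λ`. -/
def partSet (N n : ℕ) (lam : Fin N → ℕ) : Finset (Fin N → Finset (Fin n)) :=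
  Finset.univ.filter fun I => IsLamPartition N n lam I

/-- `I^min ∈ 𝓘_λ`, `I^min_j = {λ^{(j−1)}+1, …, λ^{(j)}}`. -/
def IminF (N n : ℕ) (lam : Fin N → ℕ) : Fin N → Finset (Fin n) := fun j =>
  Finset.univ.filter fun a : Fin n =>
    Lam N lam (j : ℕ) ≤ (a : ℕ) ∧ (a : ℕ) < Lam N lam ((j : ℕ) + 1)

/-- `|σ_I| = #{(a,b) : a ∈ I_i, b ∈ I_j, a < b, i > j}`. -/
def lenI (N n : ℕ) (I : Fin N → Finset (Fin n)) : ℕ :=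
  ((Finset.univ : Finset (Fin n × Fin n)).filter fun p =>
    ∃ i j : Fin N, j < i ∧ p.1 ∈ I i ∧ p.2 ∈ I j ∧ p.1 < p.2).card

/-- The Coxeter length (number of inversions) of a permutation of `{1,…,n}`. -/
def invCount (n : ℕ) (σ : Equiv.Perm (Fin n)) : ℕ :=
  ((Finset.univ : Finset (Fin n × Fin n)).filter fun p =>
    p.1 < p.2 ∧ σ p.2 < σ p.1).card

/-- `σ = σ_I`: `σ` maps, for each `j`, the `k`-th smallest element of `I^min_j` to the `k`-th
smallest element of `I_j`; equivalently `σ(I^min_j) = I_j` and `σ` is increasing on each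
`I^min_j`. -/
def IsSigmaI (N n : ℕ) (lam : Fin N → ℕ) (I : Fin N → Finset (Fin n))
    (σ : Equiv.Perm (Fin n)) : Prop :=
  (∀ j, (IminF N n lam j).image σ = I j) ∧
    ∀ j, ∀ a ∈ IminF N n lam j, ∀ b ∈ IminF N n lam j, a < b → σ a < σ b

/-- `σ(I) = (σ(I_1),…,σ(I_N))`. -/
def sTuple (N n : ℕ) (σ : Equiv.Perm (Fin n)) (I : Fin N → Finset (Fin n)) :
    Fin N → Finset (Fin n) := fun m => (I m).image σ

/-- The function `U_I(t;z;h)`. -/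
def Ufun (N n : ℕ) (lam : Fin N → ℕ) (I : Fin N → Finset (Fin n))
    (t : ℕ → ℕ → ℂ) (z : Fin n → ℂ) (h : ℂ) : ℂ :=
  ∏ j ∈ Finset.Icc 1 (N - 1), ∏ a ∈ Finset.range (Lam N lam j),
    ((∏ c ∈ Finset.range (Lam N lam (j + 1)),
        ((if idx N n I (j + 1) c < idx N n I j a then
            TT N n t z j a - TT N n t z (j + 1) c else 1) *
          (if idx N n I j a < idx N n I (j + 1) c then
            TT N n t z j a - TT N n t z (j + 1) c - h else 1))) *
      ∏ b ∈ Finset.range (Lam N lam j),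
        (if a < b then
          (TT N n t z j b - TT N n t z j a - h) / (TT N n t z j b - TT N n t z j a) else 1))

/-- The function `U°_I(t;z)`. -/
def Ucirc (N n : ℕ) (lam : Fin N → ℕ) (I : Fin N → Finset (Fin n))
    (t : ℕ → ℕ → ℂ) (z : Fin n → ℂ) : ℂ :=
  ∏ j ∈ Finset.Icc 1 (N - 1), ∏ a ∈ Finset.range (Lam N lam j),
    ((∏ c ∈ Finset.range (Lam N lam (j + 1)),
        (if idx N n I (j + 1) c < idx N n I j a then
          TT N n t z j a - TT N n t z (j + 1) c else 1)) *
      ∏ b ∈ Finset.range (Lam N lam j),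
        (if a < b then 1 / (TT N n t z j b - TT N n t z j a) else 1))

/-- The symmetrization group `S_{λ^{(1)}} × ⋯ × S_{λ^{(N−1)}}`: the component `σ k` permutes
the index set `{0,…,λ^{(k+1)}−1}` of the variables of the group `k+1` (paper's 1-indexing),
and the unused component (`k+1 = N`) is the identity. -/
def symSet (N n : ℕ) (lam : Fin N → ℕ) : Finset (Fin N → Equiv.Perm (Fin n)) :=
  Finset.univ.filter fun σ => ∀ k : Fin N, ∀ a : Fin n,
    ((k : ℕ) + 1 = N ∨ Lam N lam ((k : ℕ) + 1) ≤ (a : ℕ)) → σ k a = a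

/-- `t` with the variables of the group `j` (for `1 ≤ j ≤ N−1`) permuted by `σ ⟨j−1⟩`. -/
def permT (N n : ℕ) (σ : Fin N → Equiv.Perm (Fin n)) (t : ℕ → ℕ → ℂ) : ℕ → ℕ → ℂ :=
  fun j a =>
    if h : 1 ≤ j ∧ j ≤ N - 1 ∧ a < n then
      t j ((σ ⟨j - 1, by omega⟩ ⟨a, by omega⟩ : Fin n) : ℕ)
    else t j a

/-- The weight function `W_I(t;z;h)` (as a function of the complex variables). -/
def W (N n : ℕ) (lam : Fin N → ℕ) (I : Fin N → Finset (Fin n))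
    (t : ℕ → ℕ → ℂ) (z : Fin n → ℂ) (h : ℂ) : ℂ :=
  ∑ σ ∈ symSet N n lam, Ufun N n lam I (permT N n σ t) z h

/-- The limiting weight function `W°_I(t;z)` (as a function of the complex variables). -/
def Wcirc (N n : ℕ) (lam : Fin N → ℕ) (I : Fin N → Finset (Fin n))
    (t : ℕ → ℕ → ℂ) (z : Fin n → ℂ) : ℂ :=
  ∑ σ ∈ symSet N n lam, Ucirc N n lam I (permT N n σ t) z

/-- `W̌_I(t;z;h) = W_{σ0(I)}(t; z_n,…,z_1; h)`. -/
def Wcheck (N n : ℕ) (lam : Fin N → ℕ) (I : Fin N → Finset (Fin n))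
    (t : ℕ → ℕ → ℂ) (z : Fin n → ℂ) (h : ℂ) : ℂ :=
  W N n lam (fun j => (I j).image Fin.rev) t (fun a => z a.rev) h

/-- `W̌°_I(t;z) = W°_{σ0(I)}(t; z_n,…,z_1)`. -/
def WcheckCirc (N n : ℕ) (lam : Fin N → ℕ) (I : Fin N → Finset (Fin n))
    (t : ℕ → ℕ → ℂ) (z : Fin n → ℂ) : ℂ :=
  Wcirc N n lam (fun j => (I j).image Fin.rev) t (fun a => z a.rev)

/-- The substitution `t = Σ_I`, i.e. `t^{(k)}_a = z_{i^{(k)}_a}`. -/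
def SigT (N n : ℕ) (I : Fin N → Finset (Fin n)) (z : Fin n → ℂ) : ℕ → ℕ → ℂ :=
  fun j a => zf n z (idx N n I j a)

/-- `c_λ(t;h)`. -/
def clam (N n : ℕ) (lam : Fin N → ℕ) (t : ℕ → ℕ → ℂ) (h : ℂ) : ℂ :=
  ∏ i ∈ Finset.Icc 1 (N - 1), ∏ a ∈ Finset.range (Lam N lam i),
    ∏ b ∈ Finset.range (Lam N lam i), if b ≠ a then t i a - t i b - h else 1

/-- `R_λ(z)`. -/
def Rlam (N n : ℕ) (lam : Fin N → ℕ) (z : Fin n → ℂ) : ℂ :=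
  ∏ i ∈ Finset.Icc 1 (N - 1), ∏ a ∈ Finset.range (Lam N lam i),
    ∏ b ∈ Finset.Ico (Lam N lam i) (Lam N lam (i + 1)), (zf n z a - zf n z b)

/-- `Q_λ(z;h)`. -/
def Qlam (N n : ℕ) (lam : Fin N → ℕ) (z : Fin n → ℂ) (h : ℂ) : ℂ :=
  ∏ i ∈ Finset.Icc 1 (N - 1), ∏ a ∈ Finset.range (Lam N lam i),
    ∏ b ∈ Finset.Ico (Lam N lam i) (Lam N lam (i + 1)), (zf n z a - zf n z b - h)

/-- `V_λ(x;y) = ∏_{i<j} ∏_{a ∈ I^min_i} ∏_{b ∈ I^min_j} (x_a − y_b)`. -/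
def Vlam (N n : ℕ) (lam : Fin N → ℕ) (x y : Fin n → ℂ) : ℂ :=
  ∏ i : Fin N, ∏ j : Fin N,
    if i < j then ∏ a ∈ IminF N n lam i, ∏ b ∈ IminF N n lam j, (x a - y b) else 1

/-- The values of the `t`-variables are pairwise distinct within each group (so that the
cancelling denominators of the weight functions do not vanish). -/
def tDistinct (N n : ℕ) (lam : Fin N → ℕ) (t : ℕ → ℕ → ℂ) : Prop :=
  ∀ j, 1 ≤ j → j ≤ N - 1 → ∀ a b, a < Lam N lam j → b < Lam N lam j → a ≠ b → t j a ≠ t j b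

/-- `M = {min(a,b)+1, …, max(a,b)−1}`. -/
def Mset (n : ℕ) (a b : Fin n) : Finset (Fin n) :=
  Finset.univ.filter fun c => min a b < c ∧ c < max a b

/-- `r_{a,b,I} = |M ∩ I_i| + |M ∩ I_j| + 2|M ∩ (I_{k+1} ∪ ⋯ ∪ I_{l−1})|`,
`k = min(i,j)`, `l = max(i,j)`. -/
def rab (N n : ℕ) (I : Fin N → Finset (Fin n)) (a b : Fin n) (i j : Fin N) : ℕ :=
  (Mset n a b ∩ I i).card + (Mset n a b ∩ I j).card +
    2 * (Mset n a b ∩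
      ((Finset.univ.filter fun k : Fin N => min i j < k ∧ k < max i j)).biUnion I).card

/-- `I_{[a,b]} = I_k ∪ I_{k+1} ∪ ⋯ ∪ I_l`, `k = min(i,j)`, `l = max(i,j)`. -/
def Iab (N n : ℕ) (I : Fin N → Finset (Fin n)) (i j : Fin N) : Finset (Fin n) :=
  ((Finset.univ.filter fun k : Fin N => min i j ≤ k ∧ k ≤ max i j)).biUnion I

/-- `λ_r` for a natural-number index `r` (1-indexed `r+1`; junk `0` out of range). -/
def lamN (N : ℕ) (lam : Fin N → ℕ) (r : ℕ) : ℕ := if h : r < N then lam ⟨r, h⟩ else 0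

/-- `m_{a,b,I} = Σ_{r=k}^{l−1} (λ_r + λ_{r+1})`, `k = min(i,j)`, `l = max(i,j)`. -/
def mab (N : ℕ) (lam : Fin N → ℕ) (i j : Fin N) : ℕ :=
  ∑ r ∈ Finset.Ico (min (i : ℕ) (j : ℕ)) (max (i : ℕ) (j : ℕ)),
    (lamN N lam r + lamN N lam (r + 1))

noncomputable section
section
variable {N n : ℕ} {lam : Fin N → ℕ}

lemma Lam_mono {i j : ℕ} (hij : i ≤ j) : Lam N lam i ≤ Lam N lam j := by
  apply Finset.sum_le_sum_of_subset
  intro k hk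
  simp only [Finset.mem_filter, Finset.mem_univ, true_and] at *
  omega

lemma Lam_N (hlam : ∑ j, lam j = n) : Lam N lam N = n := by
  rw [← hlam]
  apply Finset.sum_congr _ (fun _ _ => rfl)
  ext k
  simp [k.isLt]

lemma Lam_le_n (hlam : ∑ j, lam j = n) {j : ℕ} (hj : j ≤ N) : Lam N lam j ≤ n :=
  le_trans (Lam_mono hj) (le_of_eq (Lam_N hlam))

lemma Lam_succ (j : Fin N) : Lam N lam ((j : ℕ) + 1) = Lam N lam j + lam j := by
  unfold Lam
  have h : (Finset.univ.filter (fun k : Fin N => (k : ℕ) < (j : ℕ) + 1))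
      = insert j (Finset.univ.filter (fun k : Fin N => (k : ℕ) < (j : ℕ))) := by
    ext k
    simp only [Finset.mem_filter, Finset.mem_univ, true_and, Finset.mem_insert]
    constructor
    · intro h; rcases Nat.lt_succ_iff_lt_or_eq.1 h with h | h
      · exact Or.inr h
      · exact Or.inl (Fin.ext h)
    · rintro (rfl | h) <;> omega
  rw [h, Finset.sum_insert (by simp)]
  ring

lemma mem_IminF {a : Fin n} {j : Fin N} :
    a ∈ IminF N n lam j ↔ Lam N lam (j : ℕ) ≤ (a : ℕ) ∧ (a : ℕ) < Lam N lam ((j : ℕ) + 1) := by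
  simp [IminF]

lemma card_filter_ge (r : ℕ) (hr : r ≤ n) :
    (Finset.univ.filter fun a : Fin n => r ≤ (a : ℕ)).card = n - r := by
  have h : Finset.image Fin.val (Finset.univ.filter fun a : Fin n => r ≤ (a : ℕ))
      = Finset.Ico r n := by
    ext b
    simp only [Finset.mem_image, Finset.mem_filter, Finset.mem_univ, true_and, Finset.mem_Ico]
    constructor
    · rintro ⟨c, hc, rfl⟩; exact ⟨hc, c.isLt⟩
    · rintro ⟨h1, h2⟩; exact ⟨⟨b, h2⟩, h1, rfl⟩
  have := congrArg Finset.card h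
  rwa [Finset.card_image_of_injective _ Fin.val_injective, Nat.card_Ico] at this

lemma card_IminF (hlam : ∑ j, lam j = n) (j : Fin N) : (IminF N n lam j).card = lam j := by
  classical
  have key : (IminF N n lam j) =
      (Finset.univ.filter fun a : Fin n => Lam N lam (j : ℕ) ≤ (a : ℕ)) \
      (Finset.univ.filter fun a : Fin n => Lam N lam ((j : ℕ) + 1) ≤ (a : ℕ)) := by
    ext a
    simp only [mem_IminF, Finset.mem_sdiff, Finset.mem_filter, Finset.mem_univ, true_and]
    omega
  have hsub : (Finset.univ.filter fun a : Fin n => Lam N lam ((j : ℕ) + 1) ≤ (a : ℕ)) ⊆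
      (Finset.univ.filter fun a : Fin n => Lam N lam (j : ℕ) ≤ (a : ℕ)) := by
    intro a
    simp only [Finset.mem_filter, Finset.mem_univ, true_and]
    have := Lam_mono (lam := lam) (N := N) (show (j:ℕ) ≤ (j:ℕ)+1 by omega)
    omega
  rw [key, Finset.card_sdiff_of_subset hsub, card_filter_ge _ (Lam_le_n hlam (by omega)),
    card_filter_ge _ (Lam_le_n hlam j.isLt), Lam_succ]
  have h1 : Lam N lam (j : ℕ) + lam j ≤ n := by
    rw [← Lam_succ]; exact Lam_le_n hlam (by omega)
  omega

lemma exists_blk (hlam : ∑ j, lam j = n) (hN : 1 ≤ N) (a : Fin n) :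
    ∃ i : Fin N, a ∈ IminF N n lam i := by
  classical
  set g := Nat.findGreatest (fun j => Lam N lam j ≤ (a : ℕ)) (N - 1) with hg
  have hg0 : Lam N lam 0 ≤ (a : ℕ) := by simp [Lam]
  have hgle : g ≤ N - 1 := Nat.findGreatest_le _
  have hgspec : Lam N lam g ≤ (a : ℕ) := Nat.findGreatest_spec (P := fun j => Lam N lam j ≤ (a:ℕ)) (Nat.zero_le _) hg0
  refine ⟨⟨g, by omega⟩, mem_IminF.2 ⟨hgspec, ?_⟩⟩
  by_cases hgN : g + 1 ≤ N - 1
  · by_contra hcon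
    push_neg at hcon
    exact Nat.findGreatest_is_greatest (Nat.lt_succ_self g) hgN hcon
  · have : g = N - 1 := by omega
    have h2 : Lam N lam (g + 1) = n := by
      rw [this]
      have : N - 1 + 1 = N := by omega
      rw [this]; exact Lam_N hlam
    rw [h2]; exact a.isLt

lemma IminF_disj {a : Fin n} {i j : Fin N} (hij : i ≠ j)
    (hi : a ∈ IminF N n lam i) (hj : a ∈ IminF N n lam j) : False := by
  rw [mem_IminF] at hi hj
  rcases Fin.lt_or_lt_of_ne hij with h | h
  · have := Lam_mono (lam := lam) (N := N) (show (i : ℕ) + 1 ≤ (j : ℕ) from h)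
    omega
  · have := Lam_mono (lam := lam) (N := N) (show (j : ℕ) + 1 ≤ (i : ℕ) from h)
    omega

lemma Imin_isPart (hlam : ∑ j, lam j = n) (hN : 1 ≤ N) :
    IsLamPartition N n lam (IminF N n lam) := by
  refine ⟨card_IminF hlam, fun a => ?_⟩
  obtain ⟨i, hi⟩ := exists_blk hlam hN a
  exact ⟨i, hi, fun j hj => by_contra fun hne => IminF_disj hne hj hi⟩

/-- Rigidity: a λ-partition in which every element sits at or after its block's start
must be `I^min`. -/
lemma rigid (hlam : ∑ j, lam j = n) (hN : 1 ≤ N) {I : Fin N → Finset (Fin n)}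
    (hI : IsLamPartition N n lam I)
    (h : ∀ j : Fin N, ∀ a ∈ I j, Lam N lam (j : ℕ) ≤ (a : ℕ)) :
    ∀ j, I j = IminF N n lam j := by
  classical
  -- first: for each r ≤ N, the set of elements in blocks ≥ r equals {a : Lam r ≤ a}
  have key : ∀ r : ℕ, r ≤ N →
      (Finset.univ.filter fun k : Fin N => r ≤ (k : ℕ)).biUnion I
        = Finset.univ.filter fun a : Fin n => Lam N lam r ≤ (a : ℕ) := by
    intro r hr
    apply Finset.eq_of_subset_of_card_le
    · intro a ha
      rw [Finset.mem_biUnion] at ha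
      obtain ⟨k, hk, hak⟩ := ha
      rw [Finset.mem_filter] at hk
      simp only [Finset.mem_filter, Finset.mem_univ, true_and]
      exact le_trans (Lam_mono hk.2) (h k a hak)
    · rw [card_filter_ge _ (Lam_le_n hlam hr), Finset.card_biUnion]
      · have hsplit : ∑ k ∈ (Finset.univ.filter fun k : Fin N => r ≤ (k : ℕ)), (I k).card
            = ∑ k ∈ (Finset.univ.filter fun k : Fin N => r ≤ (k : ℕ)), lam k := by
          exact Finset.sum_congr rfl fun k _ => hI.1 k
        rw [hsplit]
        have htot : Lam N lam r + ∑ k ∈ (Finset.univ.filter fun k : Fin N => r ≤ (k : ℕ)), lam k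
            = n := by
          rw [← hlam, Lam]
          rw [← Finset.sum_filter_add_sum_filter_not Finset.univ
            (fun k : Fin N => (k : ℕ) < r) lam]
          congr 1
          apply Finset.sum_congr _ (fun _ _ => rfl)
          ext k
          simp only [Finset.mem_filter, Finset.mem_univ, true_and, not_lt]
        omega
      · intro u hu v hv huv
        simp only [Finset.disjoint_left]
        intro a hau hav
        obtain ⟨j0, _, hj0⟩ := hI.2 a
        exact huv ((hj0 u hau).trans (hj0 v hav).symm)
  intro j
  apply Finset.eq_of_subset_of_card_le
  · intro a ha
    rw [mem_IminF]
    refine ⟨h j a ha, ?_⟩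
    by_contra hcon
    push_neg at hcon
    have hmem : a ∈ Finset.univ.filter
        fun a : Fin n => Lam N lam ((j : ℕ) + 1) ≤ (a : ℕ) := by
      simp only [Finset.mem_filter, Finset.mem_univ, true_and]; exact hcon
    rw [← key ((j : ℕ) + 1) (by omega)] at hmem
    rw [Finset.mem_biUnion] at hmem
    obtain ⟨k, hk, hak⟩ := hmem
    rw [Finset.mem_filter] at hk
    obtain ⟨j0, _, hj0⟩ := hI.2 a
    have h1 : k = j := (hj0 k hak).trans (hj0 j ha).symm
    subst h1
    omega
  · rw [card_IminF hlam, hI.1]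

/-- The core cross lemma: a λ-partition different from `I^min` places some element of a
lower min-block into a higher block. -/
lemma cross (hlam : ∑ j, lam j = n) (hN : 1 ≤ N) {I : Fin N → Finset (Fin n)}
    (hI : IsLamPartition N n lam I) (hne : I ≠ IminF N n lam) :
    ∃ i j : Fin N, i < j ∧ ∃ a : Fin n, a ∈ IminF N n lam i ∧ a ∈ I j := by
  have h1 : ¬ ∀ j : Fin N, ∀ a ∈ I j, Lam N lam (j : ℕ) ≤ (a : ℕ) := by
    intro h
    exact hne (funext (rigid hlam hN hI h))
  push_neg at h1
  obtain ⟨j, a, haj, hlt⟩ := h1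
  obtain ⟨i, hi⟩ := exists_blk hlam hN a
  refine ⟨i, j, ?_, a, hi, haj⟩
  rw [mem_IminF] at hi
  by_contra hcon
  push_neg at hcon
  have : (j : ℕ) ≤ (i : ℕ) := hcon
  have := Lam_mono (lam := lam) (N := N) this
  omega

end
section VlamLemmas
variable {N n : ℕ} {lam : Fin N → ℕ}

lemma Vlam_eq_zero {x y : Fin n → ℂ} {i j : Fin N} (hij : i < j) {a b : Fin n}
    (ha : a ∈ IminF N n lam i) (hb : b ∈ IminF N n lam j) (hxy : x a = y b) :
    Vlam N n lam x y = 0 := by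
  unfold Vlam
  apply Finset.prod_eq_zero (Finset.mem_univ i)
  apply Finset.prod_eq_zero (Finset.mem_univ j)
  rw [if_pos hij]
  apply Finset.prod_eq_zero ha
  apply Finset.prod_eq_zero hb
  rw [hxy, sub_self]

lemma Vlam_ne_zero {u v : Fin n → ℂ}
    (h : ∀ i j : Fin N, i < j → ∀ a ∈ IminF N n lam i, ∀ b ∈ IminF N n lam j, u a ≠ v b) :
    Vlam N n lam u v ≠ 0 := by
  unfold Vlam
  rw [Finset.prod_ne_zero_iff]
  intro i _
  rw [Finset.prod_ne_zero_iff]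
  intro j _
  split
  · rw [Finset.prod_ne_zero_iff]
    intro a ha
    rw [Finset.prod_ne_zero_iff]
    intro b hb
    exact sub_ne_zero.2 (h i j ‹_› a ha b hb)
  · exact one_ne_zero

lemma Vlam_diag_ne_zero {u : Fin n → ℂ} (hu : ∀ a b : Fin n, a ≠ b → u a ≠ u b)
    (σ : Equiv.Perm (Fin n)) :
    Vlam N n lam (fun c => u (σ c)) (fun c => u (σ c)) ≠ 0 := by
  apply Vlam_ne_zero
  intro i j hij a ha b hb
  have hab : a ≠ b := fun h => IminF_disj (ne_of_lt hij) ha (h ▸ hb)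
  exact hu _ _ (fun h => hab (σ.injective h))

lemma image_eq_of_maps_to {ρ : Equiv.Perm (Fin n)} {s : Finset (Fin n)}
    (h : ∀ a ∈ s, ρ a ∈ s) : s.image ρ = s :=
  Finset.eq_of_subset_of_card_le
    (fun b hb => by obtain ⟨a, ha, rfl⟩ := Finset.mem_image.mp hb; exact h a ha)
    (le_of_eq (Finset.card_image_of_injective _ ρ.injective).symm)

lemma Vlam_comp_left {u v : Fin n → ℂ} {ρ : Equiv.Perm (Fin n)}
    (hρ : ∀ j : Fin N, (IminF N n lam j).image ρ = IminF N n lam j) :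
    Vlam N n lam (fun a => u (ρ a)) v = Vlam N n lam u v := by
  unfold Vlam
  apply Finset.prod_congr rfl; intro i _
  apply Finset.prod_congr rfl; intro j _
  split
  · conv_rhs => rw [← hρ i]
    rw [Finset.prod_image (fun a _ b _ h => ρ.injective h)]
  · rfl

lemma Vlam_comp_right {u v : Fin n → ℂ} {ρ : Equiv.Perm (Fin n)}
    (hρ : ∀ j : Fin N, (IminF N n lam j).image ρ = IminF N n lam j) :
    Vlam N n lam u (fun b => v (ρ b)) = Vlam N n lam u v := by
  unfold Vlam
  apply Finset.prod_congr rfl; intro i _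
  apply Finset.prod_congr rfl; intro j _
  split
  · apply Finset.prod_congr rfl; intro a _
    conv_rhs => rw [← hρ j]
    rw [Finset.prod_image (fun a _ b _ h => ρ.injective h)]
  · rfl

/-- Cross-vanishing: for distinct partitions `J ≠ K`, `V_λ(y_{σ_K}; y_{σ_J}) = 0`. -/
lemma Vlam_cross_zero (hlam : ∑ j, lam j = n) (hN : 1 ≤ N) {J K : Fin N → Finset (Fin n)}
    (hJ : IsLamPartition N n lam J) (hJK : J ≠ K) {σJ σK : Equiv.Perm (Fin n)}
    (hσJ : ∀ m, (IminF N n lam m).image σJ = J m)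
    (hσK : ∀ m, (IminF N n lam m).image σK = K m) (y : Fin n → ℂ) :
    Vlam N n lam (fun c => y (σK c)) (fun c => y (σJ c)) = 0 := by
  classical
  set I' : Fin N → Finset (Fin n) := fun m => (J m).image σK.symm with hI'
  have hmemI' : ∀ (a : Fin n) (m : Fin N), a ∈ I' m ↔ σK a ∈ J m := by
    intro a m
    rw [hI']
    simp only [Finset.mem_image]
    constructor
    · rintro ⟨b, hb, rfl⟩; simpa using hb
    · intro h; exact ⟨σK a, h, by simp⟩
  have hI'part : IsLamPartition N n lam I' := by
    constructor
    · intro m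
      rw [hI', Finset.card_image_of_injective _ σK.symm.injective, hJ.1 m]
    · intro a
      obtain ⟨m, hm, hm'⟩ := hJ.2 (σK a)
      exact ⟨m, (hmemI' a m).2 hm, fun m' hm'' => hm' m' ((hmemI' a m').1 hm'')⟩
  have hI'ne : I' ≠ IminF N n lam := by
    intro h
    apply hJK
    funext m
    have : (J m).image σK.symm = IminF N n lam m := congrFun h m
    have h2 : J m = (IminF N n lam m).image σK := by
      rw [← this, Finset.image_image]
      simp
    rw [h2, hσK m]
  obtain ⟨i, j, hij, a, hai, haj⟩ := cross hlam hN hI'part hI'ne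
  have h3 : σK a ∈ (IminF N n lam j).image σJ := by rw [hσJ]; exact (hmemI' a j).1 haj
  obtain ⟨b, hb, hba⟩ := Finset.mem_image.1 h3
  exact Vlam_eq_zero hij hai hb (by rw [hba])

/-- `V_λ(x; x_{σ_I}) = 0` for `I ≠ I^min`. -/
lemma Vlam_x_zero (hlam : ∑ j, lam j = n) (hN : 1 ≤ N) {I : Fin N → Finset (Fin n)}
    (hI : IsLamPartition N n lam I) (hne : I ≠ IminF N n lam) {σI : Equiv.Perm (Fin n)}
    (hσI : ∀ m, (IminF N n lam m).image σI = I m) (x : Fin n → ℂ) :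
    Vlam N n lam x (fun c => x (σI c)) = 0 := by
  obtain ⟨i, j, hij, a, hai, haj⟩ := cross hlam hN hI hne
  have h3 : a ∈ (IminF N n lam j).image σI := by rw [hσI]; exact haj
  obtain ⟨b, hb, hba⟩ := Finset.mem_image.1 h3
  exact Vlam_eq_zero hij hai hb (by rw [hba])

end VlamLemmas
section VP
variable {N n : ℕ} {lam : Fin N → ℕ}

/-- The polynomial `V_λ(X; v)` in the `x`-variables. -/
def VP (N n : ℕ) (lam : Fin N → ℕ) (v : Fin n → ℂ) : MvPolynomial (Fin n) ℂ :=
  ∏ i : Fin N, ∏ j : Fin N,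
    if i < j then ∏ a ∈ IminF N n lam i, ∏ b ∈ IminF N n lam j,
      (MvPolynomial.X a - MvPolynomial.C (v b)) else 1

lemma eval_VP (u v : Fin n → ℂ) :
    MvPolynomial.eval u (VP N n lam v) = Vlam N n lam u v := by
  unfold VP Vlam
  rw [map_prod]
  refine Finset.prod_congr rfl fun i _ => ?_
  rw [map_prod]
  refine Finset.prod_congr rfl fun j _ => ?_
  split
  · rw [map_prod]
    refine Finset.prod_congr rfl fun a _ => ?_
    rw [map_prod]
    refine Finset.prod_congr rfl fun b _ => ?_
    simp
  · simp

lemma degreeOf_X_sub_C_le (a c : Fin n) (k : ℂ) :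
    MvPolynomial.degreeOf c (MvPolynomial.X a - MvPolynomial.C k : MvPolynomial (Fin n) ℂ)
      ≤ if a = c then 1 else 0 := by
  rw [sub_eq_add_neg, ← map_neg]
  refine le_trans (MvPolynomial.degreeOf_add_le _ _ _) ?_
  rw [MvPolynomial.degreeOf_C, MvPolynomial.degreeOf_X]
  simp only [max_le_iff]
  constructor
  · split <;> simp_all [eq_comm]
  · omega

lemma degreeOf_VP (hlam : ∑ j, lam j = n) (hN : 1 ≤ N) (v : Fin n → ℂ) (c : Fin n) :
    MvPolynomial.degreeOf c (VP N n lam v) + (c : ℕ) + 1 ≤ n := by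
  classical
  obtain ⟨i0, hi0⟩ := exists_blk hlam hN c
  have hbound : MvPolynomial.degreeOf c (VP N n lam v) ≤
      ∑ i : Fin N, ∑ j : Fin N,
        (if i < j ∧ c ∈ IminF N n lam i then lam j else 0) := by
    refine le_trans (degreeOf_prod_le' c _ _) (Finset.sum_le_sum fun i _ => ?_)
    refine le_trans (degreeOf_prod_le' c _ _) (Finset.sum_le_sum fun j _ => ?_)
    by_cases hij : i < j
    · rw [if_pos hij]
      refine le_trans (degreeOf_prod_le' c _ _) ?_
      have h1 : ∀ a ∈ IminF N n lam i,
          MvPolynomial.degreeOf c (∏ b ∈ IminF N n lam j,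
            (MvPolynomial.X a - MvPolynomial.C (v b) : MvPolynomial (Fin n) ℂ))
            ≤ if a = c then lam j else 0 := by
        intro a _
        refine le_trans (degreeOf_prod_le' c _ _) ?_
        refine le_trans (Finset.sum_le_sum fun b _ => degreeOf_X_sub_C_le a c (v b)) ?_
        rw [Finset.sum_const, card_IminF hlam, smul_eq_mul]
        split <;> omega
      refine le_trans (Finset.sum_le_sum h1) ?_
      rw [Finset.sum_ite_eq' (IminF N n lam i) c (fun _ => lam j)]
      split
      · rw [if_pos ⟨hij, ‹_›⟩]
      · rw [if_neg (fun h => ‹c ∉ IminF N n lam i› h.2)]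
    · rw [if_neg hij, if_neg (fun h => hij h.1)]
      simpa using MvPolynomial.degreeOf_C (1 : ℂ) c
  have hsum : ∑ i : Fin N, ∑ j : Fin N,
      (if i < j ∧ c ∈ IminF N n lam i then lam j else 0)
      = ∑ j : Fin N, (if i0 < j then lam j else 0) := by
    rw [Finset.sum_eq_single i0]
    · refine Finset.sum_congr rfl fun j _ => ?_
      by_cases h : i0 < j
      · rw [if_pos ⟨h, hi0⟩, if_pos h]
      · rw [if_neg (fun hh => h hh.1), if_neg h]
    · intro i _ hii0
      refine Finset.sum_eq_zero fun j _ => ?_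
      rw [if_neg]
      rintro ⟨_, hc⟩
      exact IminF_disj hii0 hc hi0
    · intro h
      exact absurd (Finset.mem_univ i0) h
  have hsplit : Lam N lam ((i0 : ℕ) + 1) + ∑ j : Fin N, (if i0 < j then lam j else 0) = n := by
    rw [← hlam, ← Finset.sum_filter_add_sum_filter_not Finset.univ
      (fun j : Fin N => (j : ℕ) < (i0 : ℕ) + 1) lam]
    congr 1
    rw [← Finset.sum_filter]
    have hset : (Finset.univ.filter fun j : Fin N => i0 < j)
        = Finset.univ.filter fun j : Fin N => ¬ (j : ℕ) < (i0 : ℕ) + 1 := by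
      ext j
      simp only [Finset.mem_filter, Finset.mem_univ, true_and, not_lt, Fin.lt_def]
      omega
    rw [hset]
  have hc2 : (c : ℕ) < Lam N lam ((i0 : ℕ) + 1) := (mem_IminF.1 hi0).2
  omega

end VP


section Star
variable {N n : ℕ} {lam : Fin N → ℕ}

lemma degreeOf_neg' (c : Fin n) (p : MvPolynomial (Fin n) ℂ) :
    MvPolynomial.degreeOf c (-p) = MvPolynomial.degreeOf c p := by
  rw [MvPolynomial.degreeOf_def, MvPolynomial.degreeOf_def, MvPolynomial.degrees_neg]

/-- The key interpolation identity: `Σ_J V(x;y_{σ_J}) V(y_{σ_J};w) / V(y_{σ_J};y_{σ_J}) = V(x;w)`. -/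
lemma star (hlam : ∑ j, lam j = n) (hN : 1 ≤ N)
    (sig : (Fin N → Finset (Fin n)) → Equiv.Perm (Fin n))
    (hsig : ∀ I, IsLamPartition N n lam I → IsSigmaI N n lam I (sig I))
    (y : Fin n → ℂ) (hy : ∀ a b : Fin n, a ≠ b → y a ≠ y b)
    (x w : Fin n → ℂ) :
    ∑ J ∈ partSet N n lam,
      Vlam N n lam x (fun c => y (sig J c)) * Vlam N n lam (fun c => y (sig J c)) w /
        Vlam N n lam (fun c => y (sig J c)) (fun c => y (sig J c))
      = Vlam N n lam x w := by
  classical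
  have hyInj : Function.Injective y := fun a b hab => by
    by_contra hne
    exact hy a b hne hab
  set yJ : (Fin N → Finset (Fin n)) → (Fin n → ℂ) := fun J => fun c => y (sig J c) with hyJ
  set D : (Fin N → Finset (Fin n)) → ℂ := fun J => Vlam N n lam (yJ J) (yJ J) with hD
  set P : MvPolynomial (Fin n) ℂ :=
    (∑ J ∈ partSet N n lam,
      MvPolynomial.C (Vlam N n lam (yJ J) w / D J) * VP N n lam (yJ J)) - VP N n lam w
    with hP
  -- degree bounds
  have hPdeg : ∀ c : Fin n, MvPolynomial.degreeOf c P + (c : ℕ) + 1 ≤ n := by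
    intro c
    have hc : (c : ℕ) < n := c.isLt
    rw [hP, sub_eq_add_neg]
    refine le_trans (Nat.add_le_add_right (Nat.add_le_add_right
      (MvPolynomial.degreeOf_add_le _ _ _) _) _) ?_
    have h1 : MvPolynomial.degreeOf c
        (∑ J ∈ partSet N n lam,
          MvPolynomial.C (Vlam N n lam (yJ J) w / D J) * VP N n lam (yJ J)) ≤ n - 1 - (c:ℕ) := by
      refine degreeOf_sum_le' c _ _ _ fun J _ => ?_
      refine le_trans (MvPolynomial.degreeOf_mul_le _ _ _) ?_
      rw [MvPolynomial.degreeOf_C]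
      have := degreeOf_VP (lam := lam) hlam hN (yJ J) c
      omega
    have h2 : MvPolynomial.degreeOf c (-(VP N n lam w)) ≤ n - 1 - (c:ℕ) := by
      rw [degreeOf_neg']
      have := degreeOf_VP (lam := lam) hlam hN w c
      omega
    omega
  -- vanishing at all injective tuples of nodes
  have hPvan : ∀ τ : Fin n → Fin n, Function.Injective τ →
      MvPolynomial.eval (fun a => y (τ a)) P = 0 := by
    intro τ hτ
    set π : Equiv.Perm (Fin n) := Equiv.ofBijective τ (Finite.injective_iff_bijective.1 hτ)
      with hπ
    have hπa : ∀ a, π a = τ a := fun a => rfl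
    set K : Fin N → Finset (Fin n) := fun j => (IminF N n lam j).image π with hK
    have hKpart : IsLamPartition N n lam K := by
      constructor
      · intro j
        rw [hK, Finset.card_image_of_injective _ π.injective, card_IminF hlam]
      · intro a
        obtain ⟨j, hj, hj'⟩ := (Imin_isPart hlam hN (n := n)).2 (π.symm a)
        refine ⟨j, Finset.mem_image.2 ⟨π.symm a, hj, by simp⟩, ?_⟩
        intro m hm
        obtain ⟨b, hb, hba⟩ := Finset.mem_image.1 hm
        have hbe : b = π.symm a := by rw [← hba]; simp
        exact hj' m (hbe ▸ hb)
    have hKmem : K ∈ partSet N n lam := by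
      rw [partSet, Finset.mem_filter]
      exact ⟨Finset.mem_univ _, hKpart⟩
    have hσK : ∀ m, (IminF N n lam m).image (sig K) = K m := (hsig K hKpart).1
    set ρ : Equiv.Perm (Fin n) := π.trans (sig K).symm with hρdef
    have hρ : ∀ j, (IminF N n lam j).image ρ = IminF N n lam j := by
      intro j
      apply image_eq_of_maps_to
      intro a ha
      have h1 : π a ∈ K j := by rw [hK]; exact Finset.mem_image_of_mem _ ha
      rw [← hσK j] at h1
      obtain ⟨b, hb, hba⟩ := Finset.mem_image.1 h1
      have hρa : ρ a = b := by
        rw [hρdef]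
        simp only [Equiv.trans_apply]
        rw [← hba]
        simp
      rwa [hρa]
    have hcomp : ∀ v, Vlam N n lam (fun a => y (τ a)) v = Vlam N n lam (yJ K) v := by
      intro v
      have he : (fun a => y (τ a)) = fun a => (yJ K) (ρ a) := by
        funext a
        rw [hyJ]
        simp only [hρdef, Equiv.trans_apply, Equiv.apply_symm_apply, hπa]
      rw [he, Vlam_comp_left hρ]
    rw [hP, map_sub, map_sum]
    have hterm : ∀ J ∈ partSet N n lam,
        MvPolynomial.eval (fun a => y (τ a))
          (MvPolynomial.C (Vlam N n lam (yJ J) w / D J) * VP N n lam (yJ J))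
        = (Vlam N n lam (yJ J) w / D J) * Vlam N n lam (yJ K) (yJ J) := by
      intro J _
      rw [map_mul, MvPolynomial.eval_C, eval_VP, hcomp]
    rw [Finset.sum_congr rfl hterm, eval_VP, hcomp w]
    rw [Finset.sum_eq_single_of_mem K hKmem]
    · rw [hD, div_mul_cancel₀, sub_self]
      exact Vlam_diag_ne_zero hy (sig K)
    · intro J hJ hJK
      rw [Vlam_cross_zero hlam hN (Finset.mem_filter.1 hJ).2 hJK
        (hsig J (Finset.mem_filter.1 hJ).2).1 hσK y, mul_zero]
  -- P = 0
  have hP0 : P = 0 := by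
    have h1 : MvPolynomial.rename Fin.rev P = 0 := by
      apply vanishAux n y hyInj n le_rfl
      · intro a
        have h2 : MvPolynomial.degreeOf a (MvPolynomial.rename Fin.rev P)
            = MvPolynomial.degreeOf (Fin.rev a) P := by
          conv_lhs => rw [← Fin.rev_rev a]
          exact MvPolynomial.degreeOf_rename_of_injective Fin.rev_injective (Fin.rev a)
        rw [h2]
        have h3 := hPdeg (Fin.rev a)
        have h4 : (Fin.rev a : ℕ) = n - 1 - (a : ℕ) := by
          rw [Fin.val_rev]
          omega
        have : (a : ℕ) < n := a.isLt
        omega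
      · intro τ hτ
        rw [MvPolynomial.eval_rename]
        have : ((fun a => y (τ a)) ∘ Fin.rev) = fun a => y ((τ ∘ Fin.rev) a) := rfl
        rw [this]
        exact hPvan (τ ∘ Fin.rev) (hτ.comp Fin.rev_injective)
    have h5 := MvPolynomial.rename_injective (σ := Fin n) (τ := Fin n) (R := ℂ) Fin.rev Fin.rev_injective
    apply h5
    rw [h1, map_zero]
  -- conclude by evaluating at x
  have hx0 := congrArg (MvPolynomial.eval x) hP0
  rw [hP, map_sub, map_sum, map_zero, sub_eq_zero] at hx0
  have hterm2 : ∀ J ∈ partSet N n lam,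
      MvPolynomial.eval x
        (MvPolynomial.C (Vlam N n lam (yJ J) w / D J) * VP N n lam (yJ J))
      = Vlam N n lam x (yJ J) * Vlam N n lam (yJ J) w / D J := by
    intro J _
    rw [map_mul, MvPolynomial.eval_C, eval_VP]
    ring
  rw [Finset.sum_congr rfl hterm2, eval_VP] at hx0
  exact hx0

end Star


/-- Interpolation identity: for every `S_λ`-invariant polynomial `f ∈ ℂ[x_1,…,x_n]` and all
`x, y ∈ ℂ^n`, each with pairwise distinct coordinates,
`f(x) = Σ_J [ V_λ(x;y_{σ_J})/V_λ(y_{σ_J};y_{σ_J}) · Σ_I f(x_{σ_I}) V_λ(y_{σ_J};x_{σ_I}) /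
V_λ(x_{σ_I};x_{σ_I}) ]`.  The `S_λ`-invariance of `f` is stated as invariance of its
evaluations under all permutations mapping each block `I^min_j` to itself, and the assignment
`I ↦ σ_I` is encoded by a function `sig` with the characterizing property `IsSigmaI`. -/
theorem Slam_invariant_polynomial_interpolation
    (N n : ℕ) (hN : 1 ≤ N) (hn : 1 ≤ n) (lam : Fin N → ℕ) (hlam : ∑ j, lam j = n)
    (sig : (Fin N → Finset (Fin n)) → Equiv.Perm (Fin n))
    (hsig : ∀ I, IsLamPartition N n lam I → IsSigmaI N n lam I (sig I))
    (f : MvPolynomial (Fin n) ℂ)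
    (hf : ∀ σ : Equiv.Perm (Fin n),
      (∀ j, ∀ a ∈ IminF N n lam j, σ a ∈ IminF N n lam j) →
      ∀ x : Fin n → ℂ, MvPolynomial.eval (fun c => x (σ c)) f = MvPolynomial.eval x f)
    (x y : Fin n → ℂ)
    (hx : ∀ a b : Fin n, a ≠ b → x a ≠ x b) (hy : ∀ a b : Fin n, a ≠ b → y a ≠ y b) :
    MvPolynomial.eval x f =
      ∑ J ∈ partSet N n lam,
        Vlam N n lam x (fun c => y (sig J c)) /
            Vlam N n lam (fun c => y (sig J c)) (fun c => y (sig J c)) *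
          ∑ I ∈ partSet N n lam,
            MvPolynomial.eval (fun c => x (sig I c)) f *
                Vlam N n lam (fun c => y (sig J c)) (fun c => x (sig I c)) /
              Vlam N n lam (fun c => x (sig I c)) (fun c => x (sig I c)) := by
  classical
  have hImin : IsLamPartition N n lam (IminF N n lam) := Imin_isPart hlam hN
  have hIminMem : IminF N n lam ∈ partSet N n lam := by
    rw [partSet, Finset.mem_filter]
    exact ⟨Finset.mem_univ _, hImin⟩
  symm
  -- push the outer factor inside and swap the two sums
  have hswap :
      ∑ J ∈ partSet N n lam,
        Vlam N n lam x (fun c => y (sig J c)) /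
            Vlam N n lam (fun c => y (sig J c)) (fun c => y (sig J c)) *
          ∑ I ∈ partSet N n lam,
            MvPolynomial.eval (fun c => x (sig I c)) f *
                Vlam N n lam (fun c => y (sig J c)) (fun c => x (sig I c)) /
              Vlam N n lam (fun c => x (sig I c)) (fun c => x (sig I c))
      = ∑ I ∈ partSet N n lam,
          MvPolynomial.eval (fun c => x (sig I c)) f /
              Vlam N n lam (fun c => x (sig I c)) (fun c => x (sig I c)) *
            ∑ J ∈ partSet N n lam,
              Vlam N n lam x (fun c => y (sig J c)) *
                Vlam N n lam (fun c => y (sig J c)) (fun c => x (sig I c)) /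
                Vlam N n lam (fun c => y (sig J c)) (fun c => y (sig J c)) := by
    rw [Finset.sum_congr rfl fun J _ => Finset.mul_sum _ _ _]
    rw [Finset.sum_comm]
    refine Finset.sum_congr rfl fun I _ => ?_
    rw [Finset.mul_sum]
    refine Finset.sum_congr rfl fun J _ => ?_
    ring
  rw [hswap]
  have hstar : ∀ I ∈ partSet N n lam,
      MvPolynomial.eval (fun c => x (sig I c)) f /
          Vlam N n lam (fun c => x (sig I c)) (fun c => x (sig I c)) *
        ∑ J ∈ partSet N n lam,
          Vlam N n lam x (fun c => y (sig J c)) *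
            Vlam N n lam (fun c => y (sig J c)) (fun c => x (sig I c)) /
            Vlam N n lam (fun c => y (sig J c)) (fun c => y (sig J c))
      = MvPolynomial.eval (fun c => x (sig I c)) f /
          Vlam N n lam (fun c => x (sig I c)) (fun c => x (sig I c)) *
          Vlam N n lam x (fun c => x (sig I c)) := by
    intro I _
    rw [star hlam hN sig hsig y hy x (fun c => x (sig I c))]
  rw [Finset.sum_congr rfl hstar]
  rw [Finset.sum_eq_single_of_mem (IminF N n lam) hIminMem]
  · -- diagonal term
    have himg : ∀ m, (IminF N n lam m).image (sig (IminF N n lam)) = IminF N n lam m :=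
      (hsig _ hImin).1
    have hpres : ∀ j, ∀ a ∈ IminF N n lam j, sig (IminF N n lam) a ∈ IminF N n lam j := by
      intro j a ha
      rw [← himg j]
      exact Finset.mem_image_of_mem _ ha
    have hfx : MvPolynomial.eval (fun c => x (sig (IminF N n lam) c)) f
        = MvPolynomial.eval x f := hf (sig (IminF N n lam)) hpres x
    have hV1 : Vlam N n lam x (fun c => x (sig (IminF N n lam) c)) = Vlam N n lam x x :=
      Vlam_comp_right himg
    have hV2 : Vlam N n lam (fun c => x (sig (IminF N n lam) c))
        (fun c => x (sig (IminF N n lam) c)) = Vlam N n lam x x := by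
      rw [Vlam_comp_left himg, Vlam_comp_right himg]
    rw [hfx, hV1, hV2]
    have hVne : Vlam N n lam x x ≠ 0 := by
      have := Vlam_diag_ne_zero (lam := lam) hx (Equiv.refl (Fin n))
      simpa using this
    rw [div_mul_cancel₀ _ hVne]
  · -- off-diagonal terms vanish
    intro I hI hne
    rw [Vlam_x_zero hlam hN (Finset.mem_filter.1 hI).2 hne
      (hsig I (Finset.mem_filter.1 hI).2).1 x, mul_zero]
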